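/- arXiv:1311.7252 — 2 statements merged into one kernel-verified Lean document; each statement's English description precedes it below -/
import Mathlib

section
/- Let G be a finite group and τ an involutory anti-automorphism of G. The following are equivalent: (a) Σ_{g∈G} ζ_τ(g)² = Σ_{g∈G} v(g); (b) every conjugacy class of G is τ-invariant (mapped onto itself by τ); (c) ρ ∼ ρ^τ for every irreducible complex representation ρ of G. -/
open Module

namespace CST

variable {G : Type*} [Group G]

/-- The `τ`-conjugate representation `ρ^τ` on the dual space, `ρ^τ(g) = ρ(τ(g))^T`. -/
def tauConj {k V : Type*} [CommRing k] [AddCommGroup V] [Module k V]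
    (ρ : Representation k G V) (τ : G → G)
    (hmul : ∀ a b : G, τ (a * b) = τ b * τ a) :
    Representation k G (Module.Dual k V) where
  toFun g := (ρ (τ g)).dualMap
  map_one' := by
    have h0 : τ 1 = τ 1 * τ 1 := by simpa using hmul 1 1
    have h2 : τ 1 * 1 = τ 1 * τ 1 := by rw [mul_one]; exact h0
    have h1 : τ 1 = 1 := (mul_left_cancel h2).symm
    ext φ v
    simp [h1]
  map_mul' g h := by
    ext φ v
    simp [hmul, LinearMap.dualMap_apply, Module.End.mul_apply, map_mul]

/-- The space of intertwining operators between two representations. -/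
def repHom {k V W : Type*} [CommRing k] [AddCommGroup V] [Module k V]
    [AddCommGroup W] [Module k W]
    (ρ : Representation k G V) (σ : Representation k G W) :
    Submodule k (V →ₗ[k] W) where
  carrier := {A | ∀ g : G, A ∘ₗ ρ g = σ g ∘ₗ A}
  zero_mem' := by intro g; ext v; simp
  add_mem' := by
    intro A B hA hB g
    ext v
    have h1 := LinearMap.congr_fun (hA g) v
    have h2 := LinearMap.congr_fun (hB g) v
    simp only [LinearMap.comp_apply, LinearMap.add_apply] at *
    simp [h1, h2]
  smul_mem' := by
    intro c A hA g
    ext v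
    have h1 := LinearMap.congr_fun (hA g) v
    simp only [LinearMap.comp_apply, LinearMap.smul_apply] at *
    simp [h1]

/-- Symmetric operators `A : V' → V` (identifying `V` with its bidual):
`φ(Aψ) = ψ(Aφ)`. -/
def symSub (k V : Type*) [CommRing k] [AddCommGroup V] [Module k V] :
    Submodule k (Module.Dual k V →ₗ[k] V) where
  carrier := {A | ∀ φ ψ : Module.Dual k V, φ (A ψ) = ψ (A φ)}
  zero_mem' := by intro φ ψ; simp
  add_mem' := by
    intro A B hA hB φ ψ
    simp [hA φ ψ, hB φ ψ]
  smul_mem' := by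
    intro c A hA φ ψ
    simp [hA φ ψ]

/-- Antisymmetric operators `A : V' → V`: `φ(Aψ) = -ψ(Aφ)`. -/
def skewSub (k V : Type*) [CommRing k] [AddCommGroup V] [Module k V] :
    Submodule k (Module.Dual k V →ₗ[k] V) where
  carrier := {A | ∀ φ ψ : Module.Dual k V, φ (A ψ) = -ψ (A φ)}
  zero_mem' := by intro φ ψ; simp
  add_mem' := by
    intro A B hA hB φ ψ
    simp [hA φ ψ, hB φ ψ]; ring
  smul_mem' := by
    intro c A hA φ ψ
    simp [hA φ ψ]

/-- The `τ`-Frobenius–Schur number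
`C_τ(ρ) = dim Hom_G^Sym(ρ^τ, ρ) - dim Hom_G^Skew(ρ^τ, ρ)`. -/
noncomputable def FSnum {V : Type*} [AddCommGroup V] [Module ℂ V]
    (ρ : Representation ℂ G V) (τ : G → G)
    (hmul : ∀ a b : G, τ (a * b) = τ b * τ a) : ℤ :=
  (Module.finrank ℂ ↥(repHom (tauConj ρ τ hmul) ρ ⊓ symSub ℂ V) : ℤ)
    - (Module.finrank ℂ ↥(repHom (tauConj ρ τ hmul) ρ ⊓ skewSub ℂ V) : ℤ)

/-- Equivalence of representations. -/
def RepEquiv {k V W : Type*} [CommRing k] [AddCommGroup V] [Module k V]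
    [AddCommGroup W] [Module k W]
    (ρ : Representation k G V) (σ : Representation k G W) : Prop :=
  ∃ e : V ≃ₗ[k] W, ∀ (g : G) (v : V), e (ρ g v) = σ g (e v)

/-- Irreducibility of a representation. -/
def IsIrreducible {k V : Type*} [CommRing k] [AddCommGroup V] [Module k V]
    (ρ : Representation k G V) : Prop :=
  Nontrivial V ∧
    ∀ U : Submodule k V, (∀ (g : G), ∀ v ∈ U, ρ g v ∈ U) → U = ⊥ ∨ U = ⊤

/-- The subrepresentation on an invariant submodule. -/
def subRep {k V : Type*} [CommRing k] [AddCommGroup V] [Module k V]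
    (ρ : Representation k G V) (U : Submodule k V)
    (hU : ∀ (g : G), ∀ v ∈ U, ρ g v ∈ U) : Representation k G U where
  toFun g := (ρ g).restrict (hU g)
  map_one' := by
    ext v
    simp [LinearMap.restrict_apply]
  map_mul' g h := by
    ext v
    simp [LinearMap.restrict_apply]

/-- A representation is multiplicity-free: in any decomposition into irreducible
subrepresentations, the summands are pairwise non-equivalent. -/
def MultFree {k V : Type*} [CommRing k] [AddCommGroup V] [Module k V]
    (ρ : Representation k G V) : Prop :=
  ∀ (m : ℕ) (U : Fin m → Submodule k V)
    (hU : ∀ i, ∀ (g : G), ∀ v ∈ U i, ρ g v ∈ U i),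
    DirectSum.IsInternal U →
    (∀ i, IsIrreducible (subRep ρ (U i) (hU i))) →
    ∀ i j, i ≠ j → ¬ RepEquiv (subRep ρ (U i) (hU i)) (subRep ρ (U j) (hU j))

/-- A representation of `G` is real if it admits a basis in which all matrix
coefficients are real valued. -/
def IsRealRep {V : Type*} [AddCommGroup V] [Module ℂ V]
    (ρ : Representation ℂ G V) : Prop :=
  ∃ (n : ℕ) (b : Basis (Fin n) ℂ V),
    ∀ (g : G) (i j : Fin n), ((LinearMap.toMatrix b b (ρ g)) i j).im = 0

/-- Direct sum of two representations. -/
def prodRep {k V W : Type*} [CommRing k] [AddCommGroup V] [Module k V]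
    [AddCommGroup W] [Module k W]
    (σ : Representation k G V) (ρ : Representation k G W) :
    Representation k G (V × W) where
  toFun g := (σ g).prodMap (ρ g)
  map_one' := by
    apply LinearMap.ext
    intro x
    simp
  map_mul' g h := by
    apply LinearMap.ext
    intro x
    simp [Module.End.mul_apply]

/-- Induced representation carrier:
`Ind_K^G V = {F : G → V | F(gk) = σ(k⁻¹) F(g)}`. -/
def indCarrier {k V : Type*} [CommRing k] [AddCommGroup V] [Module k V]
    (K : Subgroup G) (σ : Representation k K V) : Submodule k (G → V) where
  carrier := {F | ∀ (g : G) (x : K), F (g * x) = σ x⁻¹ (F g)}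
  zero_mem' := by intro g x; simp
  add_mem' := by intro F₁ F₂ h₁ h₂ g x; simp [h₁ g x, h₂ g x]
  smul_mem' := by intro c F h g x; simp [h g x]

/-- The induced representation `Ind_K^G σ`, acting by `(g₀ · F)(g) = F(g₀⁻¹ g)`. -/
def indRep {k V : Type*} [CommRing k] [AddCommGroup V] [Module k V]
    (K : Subgroup G) (σ : Representation k K V) :
    Representation k G (indCarrier K σ) where
  toFun g₀ :=
    { toFun := fun F => ⟨fun g => F.1 (g₀⁻¹ * g), by
        intro g x
        have h := F.2 (g₀⁻¹ * g) x
        simpa [mul_assoc] using h⟩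
      map_add' := fun F₁ F₂ => rfl
      map_smul' := fun c F => rfl }
  map_one' := by
    apply LinearMap.ext
    intro F
    apply Subtype.ext
    funext g
    simp
  map_mul' g h := by
    apply LinearMap.ext
    intro F
    apply Subtype.ext
    funext x
    simp [mul_assoc, mul_inv_rev]

/-- The permutation representation of `G` on `L(X)`. -/
def permRep (G X : Type*) [Group G] [MulAction G X] :
    Representation ℂ G (X → ℂ) where
  toFun g :=
    { toFun := fun f x => f (g⁻¹ • x)
      map_add' := fun f₁ f₂ => rfl
      map_smul' := fun c f => rfl }
  map_one' := by
    ext f x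
    simp
  map_mul' g h := by
    ext f x
    simp [mul_smul]

/-- The twisted action `(π^τ × π)(g)(x₁,x₂) = (π(τ(g⁻¹)) x₁, π(g) x₂)` on `X × X`. -/
def twistAct {X : Type*} [MulAction G X] (τ : G → G) (g : G) (p : X × X) :
    X × X := (τ g⁻¹ • p.1, g • p.2)

/-- Orbits of the twisted action on `X × X`. -/
def IsTwistOrbit {X : Type*} [MulAction G X] (τ : G → G)
    (O : Set (X × X)) : Prop :=
  ∃ p : X × X, O = {q | ∃ g : G, q = twistAct τ g p}

/-- Orbits of the diagonal action of `G` on `X × X`. -/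
def IsDiagOrbit (G : Type*) {X : Type*} [Group G] [MulAction G X]
    (O : Set (X × X)) : Prop :=
  ∃ p : X × X, O = {q | ∃ g : G, q = (g • p.1, g • p.2)}

/-- `G` is `τ`-simply reducible: the tensor product of any two irreducible
representations is multiplicity-free, and every irreducible representation is
equivalent to its `τ`-conjugate. -/
def TauSimplyReducible (G : Type*) [Group G] (τ : G → G)
    (hmul : ∀ a b : G, τ (a * b) = τ b * τ a) : Prop :=
  (∀ (V W : Type) [AddCommGroup V] [Module ℂ V] [FiniteDimensional ℂ V]
      [AddCommGroup W] [Module ℂ W] [FiniteDimensional ℂ W]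
      (ρ₁ : Representation ℂ G V) (ρ₂ : Representation ℂ G W),
      IsIrreducible ρ₁ → IsIrreducible ρ₂ → MultFree (ρ₁.tprod ρ₂)) ∧
  (∀ (V : Type) [AddCommGroup V] [Module ℂ V] [FiniteDimensional ℂ V]
      (ρ : Representation ℂ G V), IsIrreducible ρ → RepEquiv (tauConj ρ τ hmul) ρ)

/-- The double coset of `s` with respect to the diagonal subgroup of `G × G × G`. -/
def diagCoset3 (G : Type*) [Group G] (s : G × G × G) : Set (G × G × G) :=
  {x | ∃ a b : G, x = (a, a, a) * s * (b, b, b)}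

/-- The character of a representation. -/
noncomputable def repChar {V : Type*} [AddCommGroup V] [Module ℂ V]
    (σ : Representation ℂ G V) (g : G) : ℂ :=
  LinearMap.trace ℂ V (σ g)

end CST


namespace CSTAux
open Finset

section Part1

variable {G : Type*} [Group G] (τ : G → G)
  (hmul : ∀ a b : G, τ (a * b) = τ b * τ a)
  (hinv : ∀ g : G, τ (τ g) = g)

include hmul hinv
set_option linter.unusedSectionVars false

omit hinv in
theorem tau_one : τ 1 = 1 := by
  have h0 : τ 1 = τ 1 * τ 1 := by simpa using hmul 1 1
  have h2 : τ 1 * 1 = τ 1 * τ 1 := by rw [mul_one]; exact h0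
  exact (mul_left_cancel h2).symm

omit hinv in
theorem tau_inv (g : G) : τ g⁻¹ = (τ g)⁻¹ :=
  eq_inv_of_mul_eq_one_left (by rw [← hmul, mul_inv_cancel, tau_one τ hmul])

theorem tau_conj {a b : G} (h : IsConj a b) : IsConj (τ a) (τ b) := by
  obtain ⟨c, hc⟩ := isConj_iff.1 h
  refine isConj_iff.2 ⟨(τ c)⁻¹, ?_⟩
  rw [← hc, hmul, hmul, tau_inv τ hmul]
  group

/-- (b) in set form iff the pointwise form. -/
theorem setform_iff :
    (∀ g : G, τ '' {x : G | IsConj g x} = {x : G | IsConj g x}) ↔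
      ∀ g : G, IsConj g (τ g) := by
  constructor
  · intro h g
    have : τ g ∈ τ '' {x : G | IsConj g x} := ⟨g, IsConj.refl g, rfl⟩
    rw [h g] at this
    exact this
  · intro h g
    ext y
    constructor
    · rintro ⟨x, hx, rfl⟩
      exact (h g).trans (tau_conj τ hmul hinv hx)
    · intro hy
      refine ⟨τ y, ?_, hinv y⟩
      exact (h g).trans (tau_conj τ hmul hinv hy)

section Count
open Classical in
omit hinv in
theorem key_alg (h x : G) :
    τ (h * x)⁻¹ * (h * x) = τ h⁻¹ * h ↔ h * x * h⁻¹ = τ x := by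
  have e1 : τ (h * x)⁻¹ * (h * x) = (τ h)⁻¹ * ((τ x)⁻¹ * (h * x)) := by
    rw [mul_inv_rev, hmul, tau_inv τ hmul, tau_inv τ hmul]
    group
  rw [e1, tau_inv τ hmul, mul_right_inj, inv_mul_eq_iff_eq_mul,
    mul_inv_eq_iff_eq_mul]

open Classical in
theorem count_iff [Fintype G] :
    ((∑ g : G, Set.ncard {h : G | τ h⁻¹ * h = g} ^ 2 =
        ∑ g : G, Set.ncard {h : G | h * g = g * h})) ↔
      ∀ g : G, IsConj g (τ g) := by
  classical
  set A : G → Finset G := fun g => Finset.univ.filter (fun h => τ h⁻¹ * h = g) with hA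
  set B : G → Finset G := fun x => Finset.univ.filter (fun h => h * x * h⁻¹ = τ x) with hB
  set C : G → Finset G := fun x => Finset.univ.filter (fun h => h * x = x * h) with hC
  have hnc1 : ∀ g : G, Set.ncard {h : G | τ h⁻¹ * h = g} = (A g).card := by
    intro g
    rw [Set.ncard_eq_toFinset_card']
    congr 1
    ext h
    simp [hA]
  have hnc2 : ∀ g : G, Set.ncard {h : G | h * g = g * h} = (C g).card := by
    intro g
    rw [Set.ncard_eq_toFinset_card']
    congr 1
    ext h
    simp [hC]
  set T1 : Finset (G × G) :=
    Finset.univ.filter (fun p : G × G => τ p.1⁻¹ * p.1 = τ p.2⁻¹ * p.2) with hT1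
  set T2 : Finset (G × G) :=
    Finset.univ.filter (fun p : G × G => p.1 * p.2 * p.1⁻¹ = τ p.2) with hT2
  -- sum of squares = |T1|
  have e2 : T1.card = ∑ g : G, (A g).card ^ 2 := by
    rw [Finset.card_eq_sum_card_fiberwise
      (f := fun p : G × G => τ p.1⁻¹ * p.1) (t := Finset.univ)
      (fun p _ => Finset.mem_univ _)]
    refine Finset.sum_congr rfl (fun g _ => ?_)
    have : T1.filter (fun p : G × G => τ p.1⁻¹ * p.1 = g) = A g ×ˢ A g := by
      ext ⟨h, k⟩
      simp only [hT1, hA, Finset.mem_filter, Finset.mem_univ, true_and,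
        Finset.mem_product]
      constructor
      · rintro ⟨e, rfl⟩; exact ⟨rfl, e.symm⟩
      · rintro ⟨e1, e2⟩; exact ⟨e1.trans e2.symm, e1⟩
    rw [this, Finset.card_product, sq]
  -- |T1| = |T2|
  have e3 : T1.card = T2.card := by
    apply Finset.card_nbij' (i := fun p => (p.1, p.1⁻¹ * p.2))
      (j := fun q => (q.1, q.1 * q.2))
    · intro ⟨h, k⟩ hp
      simp only [hT1, Finset.mem_coe, Finset.mem_filter, Finset.mem_univ, true_and] at hp
      simp only [hT2, Finset.mem_coe, Finset.mem_filter, Finset.mem_univ, true_and]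
      have := (key_alg τ hmul h (h⁻¹ * k)).1 (by rw [mul_inv_cancel_left]; exact hp.symm)
      exact this
    · intro ⟨h, x⟩ hq
      simp only [hT2, Finset.mem_coe, Finset.mem_filter, Finset.mem_univ, true_and] at hq
      simp only [hT1, Finset.mem_coe, Finset.mem_filter, Finset.mem_univ, true_and]
      exact ((key_alg τ hmul h x).2 hq).symm
    · intro p _; simp
    · intro q _; simp
  -- |T2| = ∑ x |B x|
  have e4 : T2.card = ∑ x : G, (B x).card := by
    rw [Finset.card_eq_sum_card_fiberwise
      (f := fun p : G × G => p.2) (t := Finset.univ) (fun p _ => Finset.mem_univ _)]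
    refine Finset.sum_congr rfl (fun x _ => ?_)
    have : T2.filter (fun p : G × G => p.2 = x) = (B x) ×ˢ {x} := by
      ext ⟨h, y⟩
      simp only [hT2, hB, Finset.mem_filter, Finset.mem_univ, true_and,
        Finset.mem_product, Finset.mem_singleton]
      constructor
      · rintro ⟨e, rfl⟩; exact ⟨e, rfl⟩
      · rintro ⟨e, rfl⟩; exact ⟨e, rfl⟩
    rw [this, Finset.card_product, Finset.card_singleton, mul_one]
  -- |B x| = if conj then |C x| else 0
  have e5 : ∀ x : G, (B x).card = if IsConj x (τ x) then (C x).card else 0 := by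
    intro x
    split_ifs with hcj
    · obtain ⟨h₀, hh₀⟩ := isConj_iff.1 hcj
      apply Finset.card_nbij' (i := fun h => h₀⁻¹ * h) (j := fun c => h₀ * c)
      · intro h hh
        simp only [hB, Finset.mem_coe, Finset.mem_filter, Finset.mem_univ, true_and] at hh
        simp only [hC, Finset.mem_coe, Finset.mem_filter, Finset.mem_univ, true_and]
        have e : h * x = h₀ * x * h₀⁻¹ * h := by
          rw [hh₀.trans hh.symm]; group
        rw [mul_assoc h₀⁻¹, e]; group
      · intro c hc
        simp only [hC, Finset.mem_coe, Finset.mem_filter, Finset.mem_univ, true_and] at hc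
        simp only [hB, Finset.mem_coe, Finset.mem_filter, Finset.mem_univ, true_and]
        have hcx : c * x * c⁻¹ = x := by rw [hc]; group
        have : h₀ * c * x * (h₀ * c)⁻¹ = h₀ * (c * x * c⁻¹) * h₀⁻¹ := by group
        rw [this, hcx, hh₀]
      · intro h _; simp
      · intro c _; simp
    · rw [Finset.card_eq_zero]
      apply Finset.eq_empty_of_forall_notMem
      intro h hh
      simp only [hB, Finset.mem_filter, Finset.mem_univ, true_and] at hh
      exact hcj (isConj_iff.2 ⟨h, hh⟩)
  have lhs_eq : ∑ g : G, Set.ncard {h : G | τ h⁻¹ * h = g} ^ 2 =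
      ∑ x : G, (if IsConj x (τ x) then (C x).card else 0) := by
    simp_rw [hnc1]
    rw [← e2, e3, e4]
    exact Finset.sum_congr rfl (fun x _ => e5 x)
  have rhs_eq : ∑ g : G, Set.ncard {h : G | h * g = g * h} = ∑ x : G, (C x).card := by
    simp_rw [hnc2]
  rw [lhs_eq, rhs_eq]
  have hle : ∀ x ∈ (Finset.univ : Finset G),
      (if IsConj x (τ x) then (C x).card else 0) ≤ (C x).card := by
    intro x _
    split_ifs <;> simp
  rw [Finset.sum_eq_sum_iff_of_le hle]
  constructor
  · intro h x
    have := h x (Finset.mem_univ x)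
    by_contra hc
    rw [if_neg hc] at this
    have h1 : (1 : G) ∈ C x := by simp [hC]
    exact (Finset.card_ne_zero_of_mem h1) this.symm
  · intro h x _
    rw [if_pos (h x)]

end Count

end Part1

end CSTAux

open Module LinearMap

namespace CSTAux2

variable {G : Type*} [Group G]

/-- Transport of a representation along a linear equivalence. -/
def conjRep {k V W : Type*} [CommRing k] [AddCommGroup V] [Module k V]
    [AddCommGroup W] [Module k W]
    (ρ : Representation k G V) (e : V ≃ₗ[k] W) : Representation k G W where
  toFun g := e.toLinearMap ∘ₗ ρ g ∘ₗ e.symm.toLinearMap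
  map_one' := by ext w; simp
  map_mul' g h := by ext w; simp [Module.End.mul_apply]

theorem conjRep_apply {k V W : Type*} [CommRing k] [AddCommGroup V] [Module k V]
    [AddCommGroup W] [Module k W]
    (ρ : Representation k G V) (e : V ≃ₗ[k] W) (g : G) (w : W) :
    conjRep ρ e g w = e (ρ g (e.symm w)) := rfl

theorem conjRep_irreducible {k V W : Type*} [CommRing k] [AddCommGroup V] [Module k V]
    [AddCommGroup W] [Module k W]
    (ρ : Representation k G V) (e : V ≃ₗ[k] W) (h : CST.IsIrreducible ρ) :
    CST.IsIrreducible (conjRep ρ e) := by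
  obtain ⟨hnt, hsub⟩ := h
  constructor
  · exact e.symm.toEquiv.nontrivial
  · intro U' hU'
    have hc := hsub (U'.comap (e.toLinearMap)) (by
      intro g v hv
      simp only [Submodule.mem_comap] at hv ⊢
      have h2 := hU' g (e v) hv
      rw [conjRep_apply, e.symm_apply_apply] at h2
      exact h2)
    rcases hc with hc | hc
    · left
      rw [Submodule.eq_bot_iff] at hc ⊢
      intro w hw
      have : e.symm w ∈ U'.comap e.toLinearMap := by
        simp only [Submodule.mem_comap, LinearEquiv.coe_coe, e.apply_symm_apply]
        exact hw
      have := hc _ this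
      rw [← e.apply_symm_apply w, this, map_zero]
    · right
      rw [Submodule.eq_top_iff'] at hc ⊢
      intro w
      have := hc (e.symm w)
      simpa only [Submodule.mem_comap, LinearEquiv.coe_coe, e.apply_symm_apply] using this

/-- Schur: an endomorphism commuting with an irreducible action is scalar. -/
theorem schur_endo {V : Type*} [AddCommGroup V] [Module ℂ V] [FiniteDimensional ℂ V]
    (ρ : Representation ℂ G V) (hirr : CST.IsIrreducible ρ)
    (A : V →ₗ[ℂ] V) (hcomm : ∀ g : G, A ∘ₗ ρ g = ρ g ∘ₗ A) :
    ∃ c : ℂ, A = c • LinearMap.id := by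
  haveI : Nontrivial V := hirr.1
  obtain ⟨c, hc⟩ := Module.End.exists_eigenvalue A
  refine ⟨c, ?_⟩
  have hinv : ∀ (g : G), ∀ v ∈ Module.End.eigenspace A c, ρ g v ∈ Module.End.eigenspace A c := by
    intro g v hv
    rw [Module.End.mem_eigenspace_iff] at hv ⊢
    have := LinearMap.congr_fun (hcomm g) v
    simp only [LinearMap.comp_apply] at this
    rw [this, hv, map_smul]
  rcases hirr.2 _ hinv with hb | ht
  · exact absurd hb hc
  · ext v
    have hv : v ∈ Module.End.eigenspace A c := ht ▸ Submodule.mem_top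
    rw [Module.End.mem_eigenspace_iff] at hv
    simpa using hv

/-- Schur: a nonzero intertwiner between irreducibles is bijective. -/
theorem schur_bij {V W : Type*} [AddCommGroup V] [Module ℂ V]
    [AddCommGroup W] [Module ℂ W]
    (ρ : Representation ℂ G V) (σ : Representation ℂ G W)
    (hρ : CST.IsIrreducible ρ) (hσ : CST.IsIrreducible σ)
    (A : V →ₗ[ℂ] W) (hA : A ∈ CST.repHom ρ σ) (hA0 : A ≠ 0) :
    Function.Bijective A := by
  have hker : ∀ (g : G), ∀ v ∈ LinearMap.ker A, ρ g v ∈ LinearMap.ker A := by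
    intro g v hv
    rw [LinearMap.mem_ker] at hv ⊢
    have := LinearMap.congr_fun (hA g) v
    simp only [LinearMap.comp_apply] at this
    rw [this, hv, map_zero]
  have hrange : ∀ (g : G), ∀ w ∈ LinearMap.range A, σ g w ∈ LinearMap.range A := by
    intro g w hw
    obtain ⟨v, rfl⟩ := hw
    refine ⟨ρ g v, ?_⟩
    have := LinearMap.congr_fun (hA g) v
    simpa only [LinearMap.comp_apply] using this
  constructor
  · rw [← LinearMap.ker_eq_bot]
    rcases hρ.2 _ hker with h | h
    · exact h
    · exfalso
      apply hA0
      ext v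
      exact (LinearMap.mem_ker).1 (h ▸ Submodule.mem_top)
  · rw [← LinearMap.range_eq_top]
    rcases hσ.2 _ hrange with h | h
    · exfalso
      apply hA0
      ext v
      have : A v ∈ LinearMap.range A := ⟨v, rfl⟩
      rw [h] at this
      simpa using this
    · exact h

/-- The invariants of `linHom ρ σ` are exactly the intertwiners. -/
theorem invariants_linHom {k V W : Type*} [CommRing k] [AddCommGroup V] [Module k V]
    [AddCommGroup W] [Module k W]
    (ρ : Representation k G V) (σ : Representation k G W) :
    (Representation.linHom ρ σ).invariants = CST.repHom ρ σ := by
  ext f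
  rw [Representation.mem_invariants]
  constructor
  · intro h g
    ext v
    have := LinearMap.congr_fun (h g) (ρ g v)
    simp only [Representation.linHom_apply, LinearMap.comp_apply] at this
    have hgv : ρ g⁻¹ (ρ g v) = v := by
      rw [← Module.End.mul_apply, ← map_mul, inv_mul_cancel, map_one, Module.End.one_apply]
    rw [hgv] at this
    simpa [LinearMap.comp_apply] using this.symm
  · intro h g
    ext v
    have := LinearMap.congr_fun (h g⁻¹) v
    simp only [LinearMap.comp_apply] at this
    simp only [Representation.linHom_apply, LinearMap.comp_apply, this]
    rw [← Module.End.mul_apply, ← map_mul, mul_inv_cancel, map_one, Module.End.one_apply]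

end CSTAux2


section Chunk2
open Module LinearMap
namespace CSTAux2

variable {G : Type*} [Group G]

theorem trace_conj_mul {V : Type*} [AddCommGroup V] [Module ℂ V] [FiniteDimensional ℂ V]
    (ρ : Representation ℂ G V) {a b : G} (h : IsConj a b) :
    LinearMap.trace ℂ V (ρ a) = LinearMap.trace ℂ V (ρ b) := by
  obtain ⟨c, hc⟩ := isConj_iff.1 h
  have : b = c * (a * c⁻¹) := by rw [← mul_assoc, hc]
  rw [this, map_mul, LinearMap.trace_mul_comm, ← map_mul]
  congr 2
  group

theorem trace_tauConj {V : Type*} [AddCommGroup V] [Module ℂ V] [FiniteDimensional ℂ V]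
    (ρ : Representation ℂ G V) (τ : G → G)
    (hmul : ∀ a b : G, τ (a * b) = τ b * τ a) (g : G) :
    LinearMap.trace ℂ _ (CST.tauConj ρ τ hmul g) = LinearMap.trace ℂ V (ρ (τ g)) := by
  have h1 : CST.tauConj ρ τ hmul g = Module.Dual.transpose (R := ℂ) (ρ (τ g)) := rfl
  rw [h1, LinearMap.trace_transpose']

theorem trace_repEquiv {V W : Type*} [AddCommGroup V] [Module ℂ V] [FiniteDimensional ℂ V]
    [AddCommGroup W] [Module ℂ W]
    (ρ : Representation ℂ G V) (σ : Representation ℂ G W)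
    (h : CST.RepEquiv ρ σ) (g : G) :
    LinearMap.trace ℂ V (ρ g) = LinearMap.trace ℂ W (σ g) := by
  obtain ⟨e, he⟩ := h
  have : σ g = e.conj (ρ g) := by
    ext w
    rw [LinearEquiv.conj_apply]
    simp only [LinearMap.comp_apply, LinearEquiv.coe_coe]
    rw [he g (e.symm w), e.apply_symm_apply]
  rw [this, LinearMap.trace_conj']

variable [Fintype G]

theorem card_smul_finrank_invariants {M : Type*} [AddCommGroup M] [Module ℂ M]
    [FiniteDimensional ℂ M] (π : Representation ℂ G M) :
    ∑ g : G, LinearMap.trace ℂ M (π g) =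
      (Fintype.card G : ℂ) * (finrank ℂ π.invariants : ℂ) := by
  letI : Invertible (Fintype.card G : ℂ) :=
    invertibleOfNonzero (by exact_mod_cast Fintype.card_ne_zero)
  have h1 : LinearMap.trace ℂ M π.averageMap = (finrank ℂ π.invariants : ℂ) :=
    (Representation.isProj_averageMap π).trace
  have h2 : π.averageMap = ⅟ (Fintype.card G : ℂ) • ∑ g : G, π g := by
    rw [Representation.averageMap, GroupAlgebra.average, map_smul, map_sum]
    congr 1
    refine Finset.sum_congr rfl (fun g _ => ?_)
    rw [MonoidAlgebra.of_apply, Representation.asAlgebraHom_single, one_smul]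
  rw [h2] at h1
  rw [map_smul, map_sum] at h1
  have h3 : (Fintype.card G : ℂ) * (⅟ (Fintype.card G : ℂ) *
      ∑ g : G, LinearMap.trace ℂ M (π g)) = (Fintype.card G : ℂ) * (finrank ℂ π.invariants : ℂ) := by
    rw [smul_eq_mul] at h1
    rw [h1]
  rwa [← mul_assoc, mul_invOf_self, one_mul] at h3

theorem trace_linHom_eq {V W : Type*} [AddCommGroup V] [Module ℂ V] [FiniteDimensional ℂ V]
    [AddCommGroup W] [Module ℂ W] [FiniteDimensional ℂ W]
    (ρ : Representation ℂ G V) (σ : Representation ℂ G W) (g : G) :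
    LinearMap.trace ℂ _ (Representation.linHom ρ σ g) =
      LinearMap.trace ℂ W (σ g) * LinearMap.trace ℂ V (ρ g⁻¹) := by
  set e := dualTensorHomEquiv ℂ V W with he
  have hcomm := Representation.dualTensorHom_comm ρ σ g
  have hconj : Representation.linHom ρ σ g = e.conj (TensorProduct.map (ρ.dual g) (σ g)) := by
    ext f
    rw [LinearEquiv.conj_apply]
    simp only [LinearMap.comp_apply, LinearEquiv.coe_coe]
    have h4 : ∀ x, e x = dualTensorHom ℂ V W x := fun x => by
      rw [he]; rfl
    rw [h4]
    have := LinearMap.congr_fun hcomm (e.symm f)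
    simp only [LinearMap.comp_apply] at this
    rw [this]
    congr 1
    rw [← h4, e.apply_symm_apply]
  rw [hconj, LinearMap.trace_conj', LinearMap.trace_tensorProduct',
    Representation.dual_apply, LinearMap.trace_transpose', mul_comm]

theorem finrank_repHom_eq {V W : Type*} [AddCommGroup V] [Module ℂ V] [FiniteDimensional ℂ V]
    [AddCommGroup W] [Module ℂ W] [FiniteDimensional ℂ W]
    (ρ : Representation ℂ G V) (σ : Representation ℂ G W) :
    (Fintype.card G : ℂ) * (finrank ℂ (CST.repHom ρ σ) : ℂ) =
      ∑ g : G, LinearMap.trace ℂ W (σ g) * LinearMap.trace ℂ V (ρ g⁻¹) := by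
  rw [← invariants_linHom ρ σ, ← card_smul_finrank_invariants]
  exact Finset.sum_congr rfl (fun g _ => (trace_linHom_eq ρ σ g))

end CSTAux2
end Chunk2


section Chunk3
set_option linter.unusedSectionVars false
open Module LinearMap
namespace CSTAux2

variable {G : Type*} [Group G]

theorem tauConj_irreducible {V : Type*} [AddCommGroup V] [Module ℂ V] [FiniteDimensional ℂ V]
    (ρ : Representation ℂ G V) (τ : G → G)
    (hmul : ∀ a b : G, τ (a * b) = τ b * τ a) (hinv : ∀ g : G, τ (τ g) = g)
    (hirr : CST.IsIrreducible ρ) : CST.IsIrreducible (CST.tauConj ρ τ hmul) := by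
  haveI : Nontrivial V := hirr.1
  constructor
  · rw [← Module.finrank_pos_iff (R := ℂ)]
    rw [Subspace.dual_finrank_eq]
    exact Module.finrank_pos
  · intro U hU
    have hU' : ∀ g : G, ∀ φ ∈ U, φ ∘ₗ ρ g ∈ U := by
      intro g φ hφ
      have := hU (τ g) φ hφ
      have h2 : CST.tauConj ρ τ hmul (τ g) φ = φ ∘ₗ ρ g := by
        show (ρ (τ (τ g))).dualMap φ = φ ∘ₗ ρ g
        rw [hinv]
        rfl
      rwa [h2] at this
    have hU0 : ∀ g : G, ∀ v ∈ U.dualCoannihilator, ρ g v ∈ U.dualCoannihilator := by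
      intro g v hv
      rw [Submodule.mem_dualCoannihilator] at hv ⊢
      intro φ hφ
      exact hv _ (hU' g φ hφ)
    rcases hirr.2 _ hU0 with h | h
    · right
      have hann : U.dualAnnihilator = ⊥ := by
        rw [Submodule.eq_bot_iff]
        intro ξ hξ
        obtain ⟨v, rfl⟩ := (Module.evalEquiv ℂ V).surjective ξ
        have hv : v ∈ U.dualCoannihilator := by
          rw [Submodule.mem_dualCoannihilator]
          intro φ hφ
          rw [Submodule.mem_dualAnnihilator] at hξ
          have := hξ φ hφ
          rwa [Module.evalEquiv_apply, Module.Dual.eval_apply] at this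
        rw [h] at hv
        simp only [Submodule.mem_bot] at hv
        rw [hv, map_zero]
      have := Subspace.dualAnnihilator_dualCoannihilator_eq (W := U)
      rw [hann, Submodule.dualCoannihilator_bot] at this
      exact this.symm
    · left
      have h1 : U ≤ U.dualCoannihilator.dualAnnihilator :=
        Submodule.le_dualCoannihilator_dualAnnihilator U
      rw [h, Submodule.dualAnnihilator_top] at h1
      exact le_bot_iff.1 h1

variable [Fintype G]

theorem b_implies_c {V : Type*} [AddCommGroup V] [Module ℂ V] [FiniteDimensional ℂ V]
    (ρ : Representation ℂ G V) (τ : G → G)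
    (hmul : ∀ a b : G, τ (a * b) = τ b * τ a) (hinv : ∀ g : G, τ (τ g) = g)
    (hirr : CST.IsIrreducible ρ) (hb : ∀ g : G, IsConj g (τ g)) :
    CST.RepEquiv ρ (CST.tauConj ρ τ hmul) := by
  haveI : Nontrivial V := hirr.1
  set σ := CST.tauConj ρ τ hmul with hσ
  have hσirr : CST.IsIrreducible σ := tauConj_irreducible ρ τ hmul hinv hirr
  have hchar : ∀ g : G, LinearMap.trace ℂ _ (σ g) = LinearMap.trace ℂ V (ρ g) := by
    intro g
    rw [hσ, trace_tauConj ρ τ hmul g]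
    exact (trace_conj_mul ρ (hb g)).symm
  have hdim : finrank ℂ (CST.repHom ρ σ) = finrank ℂ (CST.repHom ρ ρ) := by
    have h1 := finrank_repHom_eq ρ σ
    have h2 := finrank_repHom_eq ρ ρ
    have h3 : (Fintype.card G : ℂ) * (finrank ℂ (CST.repHom ρ σ) : ℂ) =
        (Fintype.card G : ℂ) * (finrank ℂ (CST.repHom ρ ρ) : ℂ) := by
      rw [h1, h2]
      exact Finset.sum_congr rfl (fun g _ => by rw [hchar g])
    have hcard : (Fintype.card G : ℂ) ≠ 0 := by exact_mod_cast Fintype.card_ne_zero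
    have := mul_left_cancel₀ hcard h3
    exact_mod_cast this
  have hid : LinearMap.id ∈ CST.repHom ρ ρ := by
    intro g
    rw [LinearMap.id_comp, LinearMap.comp_id]
  have hidne : (⟨LinearMap.id, hid⟩ : CST.repHom ρ ρ) ≠ 0 := by
    obtain ⟨v, hv⟩ := exists_ne (0 : V)
    intro h
    apply hv
    have := congrArg Subtype.val h
    exact LinearMap.congr_fun this v
  haveI : Nontrivial (CST.repHom ρ ρ) := ⟨_, _, hidne⟩
  have hpos : 0 < finrank ℂ (CST.repHom ρ σ) := by
    rw [hdim]
    exact Module.finrank_pos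
  haveI : Nontrivial (CST.repHom ρ σ) := Module.finrank_pos_iff.1 hpos
  obtain ⟨A, hA0⟩ := exists_ne (0 : CST.repHom ρ σ)
  have hA0' : (A : V →ₗ[ℂ] Module.Dual ℂ V) ≠ 0 := by
    intro h
    apply hA0
    exact Subtype.ext h
  have hbij := schur_bij ρ σ hirr hσirr A.1 A.2 hA0'
  refine ⟨LinearEquiv.ofBijective A.1 hbij, fun g v => ?_⟩
  have := LinearMap.congr_fun (A.2 g) v
  simpa only [LinearMap.comp_apply, LinearEquiv.ofBijective_apply] using this

end CSTAux2
end Chunk3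


section Chunk4
set_option linter.unusedSectionVars false
open Module LinearMap
namespace CSTAux2

variable {G : Type*} [Group G] [Fintype G]

/-- The averaging operator `Σ_x f(x) ρ(x)`. -/
noncomputable def sumOp (f : G → ℂ) {V : Type*} [AddCommGroup V] [Module ℂ V]
    (π : Representation ℂ G V) : V →ₗ[ℂ] V :=
  ∑ x : G, f x • (π x : V →ₗ[ℂ] V)

theorem sumOp_apply (f : G → ℂ) {V : Type*} [AddCommGroup V] [Module ℂ V]
    (π : Representation ℂ G V) (v : V) :
    sumOp f π v = ∑ x : G, f x • π x v := by
  simp [sumOp, LinearMap.sum_apply]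

theorem sumOp_conjRep (f : G → ℂ) {V W : Type*} [AddCommGroup V] [Module ℂ V]
    [AddCommGroup W] [Module ℂ W] (π : Representation ℂ G V) (e : V ≃ₗ[ℂ] W)
    (h : sumOp f (conjRep π e) = 0) : sumOp f π = 0 := by
  ext v
  have h1 : sumOp f (conjRep π e) (e v) = e (sumOp f π v) := by
    rw [sumOp_apply, sumOp_apply, map_sum]
    refine Finset.sum_congr rfl (fun x _ => ?_)
    rw [conjRep_apply, e.symm_apply_apply, map_smul]
  rw [h] at h1
  simp only [LinearMap.zero_apply] at h1
  have := h1.symm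
  rw [LinearEquiv.map_eq_zero_iff] at this
  simpa using this

theorem sumOp_subRep (f : G → ℂ) {V : Type*} [AddCommGroup V] [Module ℂ V]
    (π : Representation ℂ G V) (U : Submodule ℂ V)
    (hU : ∀ (g : G), ∀ v ∈ U, π g v ∈ U) (u : U) :
    (sumOp f (CST.subRep π U hU) u : V) = sumOp f π u := by
  rw [sumOp_apply, sumOp_apply]
  rw [Submodule.coe_sum]
  refine Finset.sum_congr rfl (fun x _ => ?_)
  rw [SetLike.val_smul]
  congr 1

/-- If `f` is a class function whose pairing with the character vanishes, the averaging
operator vanishes on an irreducible representation. -/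
theorem sumOp_eq_zero_of_irr (f : G → ℂ) {V : Type*} [AddCommGroup V] [Module ℂ V]
    [FiniteDimensional ℂ V] (π : Representation ℂ G V) (hirr : CST.IsIrreducible π)
    (hf : ∀ h x : G, f (h * x * h⁻¹) = f x)
    (htr : ∑ x : G, f x * LinearMap.trace ℂ V (π x) = 0) :
    sumOp f π = 0 := by
  haveI : Nontrivial V := hirr.1
  have hcomm : ∀ h : G, sumOp f π ∘ₗ π h = π h ∘ₗ sumOp f π := by
    intro h
    apply LinearMap.ext
    intro v
    show sumOp f π (π h v) = π h (sumOp f π v)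
    rw [sumOp_apply, sumOp_apply, map_sum]
    have e2 : ∀ x : G, π h (f x • π x v) = f x • π (h * x) v := by
      intro x; rw [map_smul, map_mul, Module.End.mul_apply]
    rw [Finset.sum_congr rfl (fun x _ => e2 x)]
    have e1 : ∀ x : G, f x • π x (π h v) = f x • π (x * h) v := by
      intro x; rw [map_mul, Module.End.mul_apply]
    rw [Finset.sum_congr rfl (fun x _ => e1 x)]
    refine Fintype.sum_equiv ((Equiv.mulLeft h⁻¹).trans (Equiv.mulRight h)) _ _ (fun x => ?_)
    simp only [Equiv.trans_apply, Equiv.coe_mulLeft, Equiv.coe_mulRight]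
    have hfx : f (h⁻¹ * x * h) = f x := by
      have := hf h⁻¹ x
      rwa [inv_inv] at this
    rw [hfx]
    congr 2
    group
  obtain ⟨c, hc⟩ := schur_endo π hirr (sumOp f π) hcomm
  have htrace : LinearMap.trace ℂ V (sumOp f π) = 0 := by
    rw [sumOp, map_sum]
    rw [← htr]
    exact Finset.sum_congr rfl (fun x _ => by rw [map_smul, smul_eq_mul])
  rw [hc, map_smul, LinearMap.trace_id, smul_eq_mul] at htrace
  have hfr : (finrank ℂ V : ℂ) ≠ 0 := by
    have := Module.finrank_pos (R := ℂ) (M := V)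
    exact_mod_cast this.ne'
  have hc0 : c = 0 := by
    rcases mul_eq_zero.1 htrace with h | h
    · exact h
    · exact absurd h hfr
  rw [hc, hc0, zero_smul]

/-- Maschke's theorem for complex representations. -/
theorem maschke {V : Type*} [AddCommGroup V] [Module ℂ V] [FiniteDimensional ℂ V]
    (ρ : Representation ℂ G V) (U : Submodule ℂ V)
    (hU : ∀ (g : G), ∀ v ∈ U, ρ g v ∈ U) :
    ∃ W : Submodule ℂ V, (∀ (g : G), ∀ v ∈ W, ρ g v ∈ W) ∧ IsCompl U W := by
  obtain ⟨U', hcompl⟩ := Submodule.exists_isCompl U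
  set p := U.linearProjOfIsCompl U' hcompl with hp
  set q : V →ₗ[ℂ] V :=
    (Fintype.card G : ℂ)⁻¹ • ∑ g : G, ρ g ∘ₗ U.subtype ∘ₗ p ∘ₗ ρ g⁻¹ with hq
  have hcard : (Fintype.card G : ℂ) ≠ 0 := by exact_mod_cast Fintype.card_ne_zero
  have hqapp : ∀ v : V, q v = (Fintype.card G : ℂ)⁻¹ •
      ∑ g : G, ρ g (U.subtype (p (ρ g⁻¹ v))) := by
    intro v
    rw [hq]
    simp [LinearMap.sum_apply]
  have hqU : ∀ v : V, q v ∈ U := by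
    intro v
    rw [hqapp]
    refine Submodule.smul_mem _ _ (Submodule.sum_mem _ (fun g _ => ?_))
    exact hU g _ (SetLike.coe_mem _)
  have hqid : ∀ u, u ∈ U → q u = u := by
    intro u hu
    rw [hqapp]
    have : ∀ g : G, ρ g (U.subtype (p (ρ g⁻¹ u))) = u := by
      intro g
      have hmem : ρ g⁻¹ u ∈ U := hU g⁻¹ u hu
      have : p (ρ g⁻¹ u) = ⟨ρ g⁻¹ u, hmem⟩ := by
        rw [hp]
        exact Submodule.linearProjOfIsCompl_apply_left hcompl ⟨ρ g⁻¹ u, hmem⟩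
      rw [this]
      show ρ g (ρ g⁻¹ u) = u
      rw [← Module.End.mul_apply, ← map_mul, mul_inv_cancel, map_one, Module.End.one_apply]
    rw [Finset.sum_congr rfl (fun g _ => this g), Finset.sum_const, Finset.card_univ]
    rw [← Nat.cast_smul_eq_nsmul ℂ, smul_smul, inv_mul_cancel₀ hcard, one_smul]
  have hqcomm : ∀ h : G, ∀ v : V, q (ρ h v) = ρ h (q v) := by
    intro h v
    rw [hqapp, hqapp, map_smul, map_sum]
    congr 1
    refine Fintype.sum_equiv (Equiv.mulLeft h⁻¹)
      (fun g => ρ g (U.subtype (p (ρ g⁻¹ (ρ h v)))))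
      (fun g => ρ h (ρ g (U.subtype (p (ρ g⁻¹ v))))) (fun g => ?_)
    simp only [Equiv.coe_mulLeft]
    have h1 : ρ (h⁻¹ * g)⁻¹ v = ρ g⁻¹ (ρ h v) := by
      rw [← Module.End.mul_apply, ← map_mul]
      congr 1
      group
    have h2 : ∀ w, ρ h (ρ (h⁻¹ * g) w) = ρ g w := by
      intro w
      rw [← Module.End.mul_apply, ← map_mul]
      congr 2
      group
    rw [h1, h2]
  refine ⟨LinearMap.ker q, ?_, ?_⟩
  · intro g v hv
    rw [LinearMap.mem_ker] at hv ⊢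
    rw [hqcomm g v, hv, map_zero]
  · constructor
    · rw [Submodule.disjoint_def]
      intro v hvU hvK
      rw [LinearMap.mem_ker] at hvK
      rw [← hqid v hvU, hvK]
    · rw [codisjoint_iff, eq_top_iff]
      intro v _
      refine Submodule.mem_sup.2 ⟨q v, hqU v, v - q v, ?_, by abel⟩
      rw [LinearMap.mem_ker, map_sub, hqid (q v) (hqU v), sub_self]

end CSTAux2
end Chunk4


section Chunk5
set_option linter.unusedSectionVars false
open Module LinearMap
namespace CSTAux2

variable {G : Type*} [Group G] [Fintype G]

theorem exists_irreducible_sub {V : Type*} [AddCommGroup V] [Module ℂ V]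
    [FiniteDimensional ℂ V] [Nontrivial V] (ρ : Representation ℂ G V) :
    ∃ (U : Submodule ℂ V) (hU : ∀ (g : G), ∀ v ∈ U, ρ g v ∈ U),
      U ≠ ⊥ ∧ CST.IsIrreducible (CST.subRep ρ U hU) := by
  classical
  have hne : ∃ n : ℕ, ∃ U : Submodule ℂ V,
      ((∀ (g : G), ∀ v ∈ U, ρ g v ∈ U) ∧ U ≠ ⊥) ∧ finrank ℂ U = n :=
    ⟨finrank ℂ (⊤ : Submodule ℂ V), ⊤, ⟨fun g v _ => trivial, by
      have : Nontrivial (⊤ : Submodule ℂ V) :=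
        (Submodule.topEquiv (R := ℂ) (M := V)).toEquiv.nontrivial
      exact Submodule.nontrivial_iff_ne_bot.1 this⟩, rfl⟩
  obtain ⟨U, ⟨hUinv, hUne⟩, hUrank⟩ := Nat.find_spec hne
  refine ⟨U, hUinv, hUne, ?_⟩
  constructor
  · exact (Submodule.nontrivial_iff_ne_bot).2 hUne
  · intro U' hU'
    set U'' := U'.map U.subtype with hU''
    have hU''le : U'' ≤ U := Submodule.map_subtype_le U U'
    have hU''inv : ∀ (g : G), ∀ v ∈ U'', ρ g v ∈ U'' := by
      intro g v hv
      obtain ⟨u', hu', rfl⟩ := hv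
      have := hU' g u' hu'
      refine ⟨CST.subRep ρ U hUinv g u', this, ?_⟩
      rfl
    by_cases hbot : U'' = ⊥
    · left
      rw [Submodule.eq_bot_iff] at hbot ⊢
      intro u' hu'
      have : (u' : V) ∈ U'' := ⟨u', hu', rfl⟩
      have := hbot _ this
      exact Subtype.ext this
    · right
      have hgen : Nat.find hne ≤ finrank ℂ U'' :=
        Nat.find_min' hne ⟨U'', ⟨hU''inv, hbot⟩, rfl⟩
      have hle : finrank ℂ U'' ≤ finrank ℂ U := Submodule.finrank_mono hU''le
      have heq : U'' = U := Submodule.eq_of_le_of_finrank_eq hU''le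
        (le_antisymm hle (by rw [hUrank]; exact hgen))
      rw [Submodule.eq_top_iff']
      intro u
      have : (u : V) ∈ U'' := by rw [heq]; exact u.2
      obtain ⟨u', hu', he⟩ := this
      have : u' = u := Subtype.ext he
      rwa [← this]

theorem sumOp_zero_all (f : G → ℂ)
    (hf0 : ∀ (n : ℕ) (π : Representation ℂ G (Fin n → ℂ)),
      CST.IsIrreducible π → sumOp f π = 0) (n : ℕ) :
    ∀ {V : Type*} [AddCommGroup V] [Module ℂ V] [FiniteDimensional ℂ V]
      (ρ : Representation ℂ G V), finrank ℂ V ≤ n → sumOp f ρ = 0 := by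
  induction n with
  | zero =>
    intro V _ _ _ ρ hn
    haveI : Subsingleton V := by
      rw [← Module.finrank_zero_iff (R := ℂ)]
      omega
    ext v
    exact Subsingleton.elim _ _
  | succ n ih =>
    intro V _ _ _ ρ hn
    rcases subsingleton_or_nontrivial V with hV | hV
    · ext v
      exact Subsingleton.elim _ _
    · obtain ⟨U, hUinv, hUne, hirr⟩ := exists_irreducible_sub ρ
      -- the irreducible subrepresentation
      have hsubU : sumOp f (CST.subRep ρ U hUinv) = 0 := by
        set e := (Module.finBasis ℂ U).equivFun with he
        apply sumOp_conjRep f _ e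
        apply hf0
        exact conjRep_irreducible _ e hirr
      have hUzero : ∀ v ∈ U, sumOp f ρ v = 0 := by
        intro v hv
        have := congrArg (Subtype.val) (LinearMap.congr_fun hsubU ⟨v, hv⟩)
        rw [sumOp_subRep] at this
        simpa using this
      -- invariant complement
      obtain ⟨W, hWinv, hcompl⟩ := maschke ρ U hUinv
      have hWrank : finrank ℂ W ≤ n := by
        have hadd := Submodule.finrank_add_eq_of_isCompl hcompl
        have hUpos : 0 < finrank ℂ U := by
          haveI : Nontrivial U := Submodule.nontrivial_iff_ne_bot.2 hUne
          exact Module.finrank_pos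
        omega
      have hsubW : sumOp f (CST.subRep ρ W hWinv) = 0 := ih _ hWrank
      have hWzero : ∀ v ∈ W, sumOp f ρ v = 0 := by
        intro v hv
        have := congrArg (Subtype.val) (LinearMap.congr_fun hsubW ⟨v, hv⟩)
        rw [sumOp_subRep] at this
        simpa using this
      ext v
      have hv : v ∈ U ⊔ W := by
        rw [hcompl.sup_eq_top]
        trivial
      obtain ⟨u, hu, w, hw, rfl⟩ := Submodule.mem_sup.1 hv
      rw [LinearMap.zero_apply, map_add, hUzero u hu, hWzero w hw, add_zero]

end CSTAux2
end Chunk5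


section Chunk6
set_option linter.unusedSectionVars false
open Module LinearMap
namespace CSTAux2

variable {G : Type*} [Group G] [Fintype G]

theorem c_implies_pointwise (τ : G → G)
    (hmul : ∀ a b : G, τ (a * b) = τ b * τ a) (hinv : ∀ g : G, τ (τ g) = g)
    (hc : ∀ (V : Type) (_ : AddCommGroup V) (_ : Module ℂ V) (_ : FiniteDimensional ℂ V)
      (ρ : Representation ℂ G V), CST.IsIrreducible ρ →
        CST.RepEquiv ρ (CST.tauConj ρ τ hmul)) :
    ∀ g : G, IsConj g (τ g) := by
  classical
  by_contra hcon
  push_neg at hcon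
  obtain ⟨g, hg⟩ := hcon
  set c1 : Finset G := Finset.univ.filter (fun x => IsConj g x) with hc1
  set c2 : Finset G := Finset.univ.filter (fun x => IsConj (τ g) x) with hc2
  have hgc1 : g ∈ c1 := by
    simp only [hc1, Finset.mem_filter, Finset.mem_univ, true_and]
    exact IsConj.refl g
  have hgc2 : g ∉ c2 := by
    simp only [hc2, Finset.mem_filter, Finset.mem_univ, true_and]
    intro h
    exact hg h.symm
  have htgc2 : τ g ∈ c2 := by
    simp only [hc2, Finset.mem_filter, Finset.mem_univ, true_and]
    exact IsConj.refl (τ g)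
  have hN1 : ((c1.card : ℂ)) ≠ 0 := by
    exact_mod_cast (Finset.card_ne_zero_of_mem hgc1)
  have hN2 : ((c2.card : ℂ)) ≠ 0 := by
    exact_mod_cast (Finset.card_ne_zero_of_mem htgc2)
  set f : G → ℂ := fun x => (c1.card : ℂ)⁻¹ * (if x ∈ c1 then 1 else 0)
    - (c2.card : ℂ)⁻¹ * (if x ∈ c2 then 1 else 0) with hf
  -- f is a class function
  have hmemconj : ∀ (y h x : G), (h * x * h⁻¹ ∈ Finset.univ.filter (fun z => IsConj y z))
      ↔ (x ∈ Finset.univ.filter (fun z => IsConj y z)) := by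
    intro y h x
    simp only [Finset.mem_filter, Finset.mem_univ, true_and]
    have hxx : IsConj x (h * x * h⁻¹) := isConj_iff.2 ⟨h, rfl⟩
    exact ⟨fun hh => hh.trans hxx.symm, fun hh => hh.trans hxx⟩
  have hfclass : ∀ h x : G, f (h * x * h⁻¹) = f x := by
    intro h x
    have m1 : (h * x * h⁻¹ ∈ c1) ↔ (x ∈ c1) := hmemconj g h x
    have m2 : (h * x * h⁻¹ ∈ c2) ↔ (x ∈ c2) := hmemconj (τ g) h x
    simp only [hf]
    rw [if_congr m1 rfl rfl, if_congr m2 rfl rfl]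
  -- the trace pairing vanishes on every irreducible representation on `Fin n → ℂ`
  have hsum : ∀ (W : Type) (_ : AddCommGroup W) (_ : Module ℂ W)
      (_ : FiniteDimensional ℂ W) (π : Representation ℂ G W), CST.IsIrreducible π →
      ∑ x : G, f x * LinearMap.trace ℂ W (π x) = 0 := by
    intro W _ _ _ π hirr
    have hchar : ∀ x : G, LinearMap.trace ℂ W (π (τ x)) = LinearMap.trace ℂ W (π x) := by
      intro x
      have := trace_repEquiv _ _ (hc W inferInstance inferInstance inferInstance π hirr) x
      rw [trace_tauConj π τ hmul x] at this
      exact this.symm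
    have hconst1 : ∀ x ∈ c1, LinearMap.trace ℂ W (π x) = LinearMap.trace ℂ W (π g) := by
      intro x hx
      simp only [hc1, Finset.mem_filter, Finset.mem_univ, true_and] at hx
      exact (trace_conj_mul π hx).symm
    have hconst2 : ∀ x ∈ c2, LinearMap.trace ℂ W (π x) = LinearMap.trace ℂ W (π (τ g)) := by
      intro x hx
      simp only [hc2, Finset.mem_filter, Finset.mem_univ, true_and] at hx
      exact (trace_conj_mul π hx).symm
    have e1 : ∑ x : G, (if x ∈ c1 then (1:ℂ) else 0) * LinearMap.trace ℂ W (π x)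
        = (c1.card : ℂ) * LinearMap.trace ℂ W (π g) := by
      rw [Finset.sum_congr rfl (fun x _ => by rw [ite_mul, one_mul, zero_mul])]
      rw [← Finset.sum_filter]
      have : Finset.univ.filter (fun x => x ∈ c1) = c1 := by
        ext x; simp
      rw [this, Finset.sum_congr rfl hconst1, Finset.sum_const, nsmul_eq_mul]
    have e2 : ∑ x : G, (if x ∈ c2 then (1:ℂ) else 0) * LinearMap.trace ℂ W (π x)
        = (c2.card : ℂ) * LinearMap.trace ℂ W (π (τ g)) := by
      rw [Finset.sum_congr rfl (fun x _ => by rw [ite_mul, one_mul, zero_mul])]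
      rw [← Finset.sum_filter]
      have : Finset.univ.filter (fun x => x ∈ c2) = c2 := by
        ext x; simp
      rw [this, Finset.sum_congr rfl hconst2, Finset.sum_const, nsmul_eq_mul]
    have expand : ∑ x : G, f x * LinearMap.trace ℂ W (π x)
        = (c1.card : ℂ)⁻¹ * ((c1.card : ℂ) * LinearMap.trace ℂ W (π g))
          - (c2.card : ℂ)⁻¹ * ((c2.card : ℂ) * LinearMap.trace ℂ W (π (τ g))) := by
      have hterm : ∀ x : G, f x * LinearMap.trace ℂ W (π x)
          = (c1.card : ℂ)⁻¹ * ((if x ∈ c1 then (1:ℂ) else 0) * LinearMap.trace ℂ W (π x))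
            - (c2.card : ℂ)⁻¹ * ((if x ∈ c2 then (1:ℂ) else 0) * LinearMap.trace ℂ W (π x)) := by
        intro x
        simp only [hf]
        ring
      rw [Finset.sum_congr rfl (fun x _ => hterm x), Finset.sum_sub_distrib,
        ← Finset.mul_sum, ← Finset.mul_sum, e1, e2]
    rw [expand, ← mul_assoc, ← mul_assoc, inv_mul_cancel₀ hN1, inv_mul_cancel₀ hN2,
      one_mul, one_mul, hchar g, sub_self]
  -- hence the averaging operator vanishes on all representations
  have hall : sumOp f (CST.permRep G G) = 0 := by
    apply sumOp_zero_all f ?_ (finrank ℂ (G → ℂ)) (CST.permRep G G) le_rfl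
    intro n π hirr
    exact sumOp_eq_zero_of_irr f π hirr hfclass (hsum _ inferInstance inferInstance inferInstance π hirr)
  -- evaluate at the delta function at 1
  set δ : G → ℂ := fun x => if x = (1 : G) then 1 else 0 with hδ
  have heval2 : sumOp f (CST.permRep G G) δ g = 0 := by
    rw [hall]
    simp
  have hexpand : sumOp f (CST.permRep G G) δ g = f g := by
    rw [sumOp_apply]
    rw [Finset.sum_apply]
    have : ∀ x : G, (f x • (CST.permRep G G x δ)) g = f x * (if x = g then 1 else 0) := by
      intro x
      have happ : (CST.permRep G G x δ) g = δ (x⁻¹ • g) := rfl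
      have hite : δ (x⁻¹ • g) = (if x = g then (1:ℂ) else 0) := by
        simp only [hδ, smul_eq_mul]
        exact if_congr inv_mul_eq_one rfl rfl
      rw [Pi.smul_apply, happ, hite, smul_eq_mul]
    rw [Finset.sum_congr rfl (fun x _ => this x)]
    rw [Finset.sum_congr rfl (fun x _ => by rw [mul_ite, mul_one, mul_zero])]
    rw [Finset.sum_ite_eq' Finset.univ g f]
    simp
  rw [heval2] at hexpand
  have : f g = (c1.card : ℂ)⁻¹ := by
    rw [hf]
    simp only [if_pos hgc1, if_neg hgc2, mul_one, mul_zero, sub_zero]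
  rw [← hexpand] at this
  exact hN1 (inv_eq_zero.1 this.symm)

end CSTAux2
end Chunk6


/-- The following are equivalent: (a) `Σ_g ζ_τ(g)² = Σ_g v(g)`;
(b) every conjugacy class of `G` is `τ`-invariant; (c) `ρ ∼ ρ^τ` for every irreducible
complex representation `ρ` of `G`. -/
theorem tau_invariant_classes_criterion
    {G : Type*} [Group G] [Fintype G]
    (τ : G → G) (hmul : ∀ a b : G, τ (a * b) = τ b * τ a)
    (hinv : ∀ g : G, τ (τ g) = g) :
    ((∑ g : G, Set.ncard {h : G | τ h⁻¹ * h = g} ^ 2 =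
        ∑ g : G, Set.ncard {h : G | h * g = g * h}) ↔
      ∀ g : G, τ '' {x : G | IsConj g x} = {x : G | IsConj g x}) ∧
    ((∀ g : G, τ '' {x : G | IsConj g x} = {x : G | IsConj g x}) ↔
      ∀ (V : Type) (_ : AddCommGroup V) (_ : Module ℂ V) (_ : FiniteDimensional ℂ V)
        (ρ : Representation ℂ G V), CST.IsIrreducible ρ →
          CST.RepEquiv ρ (CST.tauConj ρ τ hmul)) := by
  constructor
  · exact (CSTAux.count_iff τ hmul hinv).trans (CSTAux.setform_iff τ hmul hinv).symm
  · constructor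
    · intro hb V i1 i2 i3 ρ hirr
      letI := i1; letI := i2; letI := i3
      exact CSTAux2.b_implies_c ρ τ hmul hinv hirr ((CSTAux.setform_iff τ hmul hinv).1 hb)
    · intro hcc
      exact (CSTAux.setform_iff τ hmul hinv).2 (CSTAux2.c_implies_pointwise τ hmul hinv hcc)
end

section
/- (Twisted Frobenius–Schur theorem of Kawanaka–Matsuyama) Let N be a finite group, τ : N → N an involutory anti-automorphism, and σ an irreducible finite-dimensional complex unitary representation of N with character χ_σ. Then (1/|N|) Σ_{n∈N} χ_σ(τ(n)⁻¹ n) = C_τ(σ). -/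
open Module

namespace TFSAux

set_option linter.unusedSectionVars false
set_option maxHeartbeats 1000000

open CST Module

variable {N : Type*} [Group N] [Fintype N]
variable {V : Type*} [AddCommGroup V] [Module ℂ V] [FiniteDimensional ℂ V]

lemma tau_one (τ : N → N) (hmul : ∀ a b : N, τ (a * b) = τ b * τ a) : τ 1 = 1 := by
  have h0 : τ 1 = τ 1 * τ 1 := by simpa using hmul 1 1
  have h2 : τ 1 * 1 = τ 1 * τ 1 := by rw [mul_one]; exact h0
  exact (mul_left_cancel h2).symm

lemma tau_inv (τ : N → N) (hmul : ∀ a b : N, τ (a * b) = τ b * τ a) (n : N) :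
    τ n⁻¹ = (τ n)⁻¹ := by
  have h : τ n⁻¹ * τ n = 1 := by
    rw [← hmul]; simp [tau_one τ hmul]
  exact eq_inv_of_mul_eq_one_left h

lemma tauConj_apply (σ : Representation ℂ N V) (τ : N → N)
    (hmul : ∀ a b : N, τ (a * b) = τ b * τ a) (g : N) :
    tauConj σ τ hmul g = (σ (τ g)).dualMap := rfl

lemma mem_repHom_iff {W : Type*} [AddCommGroup W] [Module ℂ W]
    {ρ : Representation ℂ N W} {σ : Representation ℂ N V} {A : W →ₗ[ℂ] V} :
    A ∈ repHom ρ σ ↔ ∀ g : N, A ∘ₗ ρ g = σ g ∘ₗ A := Iff.rfl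

lemma dual_sep {x y : V} (h : ∀ ψ : Dual ℂ V, ψ x = ψ y) : x = y := by
  have h0 : ∀ ψ : Dual ℂ V, ψ (x - y) = 0 := by
    intro ψ; rw [map_sub, h ψ, sub_self]
  have := (Module.forall_dual_apply_eq_zero_iff ℂ (x - y)).mp h0
  exact sub_eq_zero.mp this

/-- The averaging (Reynolds) operator onto the space of intertwiners. -/
noncomputable def avgL (σ : Representation ℂ N V) (τ : N → N) :
    (Dual ℂ V →ₗ[ℂ] V) →ₗ[ℂ] (Dual ℂ V →ₗ[ℂ] V) where
  toFun A := (Fintype.card N : ℂ)⁻¹ • ∑ n : N, σ n ∘ₗ A ∘ₗ (σ (τ n⁻¹)).dualMap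
  map_add' A B := by
    simp only [LinearMap.comp_add, LinearMap.add_comp, Finset.sum_add_distrib, smul_add]
  map_smul' c A := by
    simp only [LinearMap.comp_smul, LinearMap.smul_comp, ← Finset.smul_sum,
      RingHom.id_apply]
    rw [smul_comm]

lemma avgL_apply (σ : Representation ℂ N V) (τ : N → N) (A : Dual ℂ V →ₗ[ℂ] V) :
    avgL σ τ A = (Fintype.card N : ℂ)⁻¹ • ∑ n : N, σ n ∘ₗ A ∘ₗ (σ (τ n⁻¹)).dualMap := rfl

lemma avgL_mem (σ : Representation ℂ N V) (τ : N → N)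
    (hmul : ∀ a b : N, τ (a * b) = τ b * τ a) (A : Dual ℂ V →ₗ[ℂ] V) :
    avgL σ τ A ∈ repHom (tauConj σ τ hmul) σ := by
  intro g
  have key : ∀ n : N,
      (σ n ∘ₗ A ∘ₗ (σ (τ n⁻¹)).dualMap) ∘ₗ (σ (τ g)).dualMap
        = σ g ∘ₗ (σ (g⁻¹ * n) ∘ₗ A ∘ₗ (σ (τ (g⁻¹ * n)⁻¹)).dualMap) := by
    intro n
    have e1 : τ ((g⁻¹ * n)⁻¹) = τ g * τ n⁻¹ := by
      rw [mul_inv_rev, inv_inv, hmul]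
    ext φ
    simp only [LinearMap.comp_apply, LinearMap.dualMap_apply', e1, map_mul,
      Module.End.mul_apply]
    have e2 : (σ g) ((σ g⁻¹) ((σ n) (A (φ ∘ₗ (σ (τ g) * σ (τ n⁻¹))))))
        = (σ n) (A (φ ∘ₗ (σ (τ g) * σ (τ n⁻¹)))) := by
      rw [← Module.End.mul_apply (σ g) (σ g⁻¹), ← map_mul]
      simp
    rw [e2]
    rfl
  ext φ
  simp only [tauConj_apply, LinearMap.comp_apply, avgL_apply, LinearMap.smul_apply,
    LinearMap.sum_apply, map_smul, map_sum]
  congr 1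
  calc ∑ n : N, (σ n) (A ((σ (τ n⁻¹)).dualMap ((σ (τ g)).dualMap φ)))
      = ∑ n : N, (σ g) ((σ (g⁻¹ * n)) (A ((σ (τ (g⁻¹ * n)⁻¹)).dualMap φ))) := by
        refine Finset.sum_congr rfl fun n _ => ?_
        have := LinearMap.congr_fun (key n) φ
        simpa [LinearMap.comp_apply] using this
    _ = ∑ m : N, (σ g) ((σ m) (A ((σ (τ m⁻¹)).dualMap φ))) :=
        Fintype.sum_equiv (Equiv.mulLeft g⁻¹) _ _ (fun n => rfl)

lemma avgL_eq_self (σ : Representation ℂ N V) (τ : N → N)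
    (hmul : ∀ a b : N, τ (a * b) = τ b * τ a) {A : Dual ℂ V →ₗ[ℂ] V}
    (hA : A ∈ repHom (tauConj σ τ hmul) σ) : avgL σ τ A = A := by
  have h : ∀ n : N, σ n ∘ₗ A ∘ₗ (σ (τ n⁻¹)).dualMap = A := by
    intro n
    have h1 : A ∘ₗ (σ (τ n⁻¹)).dualMap = σ n⁻¹ ∘ₗ A := hA n⁻¹
    rw [h1, ← LinearMap.comp_assoc, ← Module.End.mul_eq_comp, ← map_mul,
      mul_inv_cancel, map_one, Module.End.one_eq_id, LinearMap.id_comp]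
  rw [avgL_apply]
  rw [Finset.sum_congr rfl (fun n _ => h n), Finset.sum_const, Finset.card_univ,
    ← Nat.cast_smul_eq_nsmul ℂ, smul_smul, inv_mul_cancel₀, one_smul]
  exact Nat.cast_ne_zero.mpr Fintype.card_ne_zero

lemma schur (σ : Representation ℂ N V) (τ : N → N)
    (hmul : ∀ a b : N, τ (a * b) = τ b * τ a) (hirr : IsIrreducible σ) :
    ∃ A₀ : Dual ℂ V →ₗ[ℂ] V,
      repHom (tauConj σ τ hmul) σ = Submodule.span ℂ {A₀} := by
  by_cases hbot : repHom (tauConj σ τ hmul) σ = ⊥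
  · exact ⟨0, by rw [hbot, Submodule.span_zero_singleton]⟩
  obtain ⟨A₀, hA₀mem, hA₀ne⟩ := Submodule.exists_mem_ne_zero_of_ne_bot hbot
  haveI : Nontrivial V := hirr.1
  -- A₀ is surjective
  have hrange : ∀ g : N, ∀ v ∈ LinearMap.range A₀, σ g v ∈ LinearMap.range A₀ := by
    rintro g _ ⟨φ, rfl⟩
    exact ⟨tauConj σ τ hmul g φ,
      (LinearMap.congr_fun (hA₀mem g) φ).symm ▸ LinearMap.congr_fun (hA₀mem g) φ⟩
  have hsurj : Function.Surjective A₀ := by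
    rcases hirr.2 (LinearMap.range A₀) hrange with h | h
    · exact absurd (LinearMap.range_eq_bot.mp h) hA₀ne
    · exact LinearMap.range_eq_top.mp h
  have hinj : Function.Injective A₀ :=
    (LinearMap.injective_iff_surjective_of_finrank_eq_finrank
      (Subspace.dual_finrank_eq)).mpr hsurj
  let e : Dual ℂ V ≃ₗ[ℂ] V := LinearEquiv.ofBijective A₀ ⟨hinj, hsurj⟩
  have he : ∀ φ, e φ = A₀ φ := fun φ => rfl
  refine ⟨A₀, le_antisymm ?_ (Submodule.span_le.mpr
    (Set.singleton_subset_iff.mpr hA₀mem))⟩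
  intro A hA
  rw [Submodule.mem_span_singleton]
  set C : Module.End ℂ V := A ∘ₗ (e.symm : V →ₗ[ℂ] Dual ℂ V) with hC
  have hCapp : ∀ v : V, C v = A (e.symm v) := fun v => rfl
  have hcomm : ∀ g : N, σ g ∘ₗ C = C ∘ₗ σ g := by
    intro g
    ext v
    have h1 : e.symm (σ g v) = tauConj σ τ hmul g (e.symm v) := by
      apply e.injective
      rw [e.apply_symm_apply, he, ← LinearMap.comp_apply, hA₀mem g,
        LinearMap.comp_apply]
      have h0 : A₀ (e.symm v) = v := e.apply_symm_apply v
      rw [h0]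
    have h3 := LinearMap.congr_fun (hA g) (e.symm v)
    simp only [LinearMap.comp_apply] at h3 ⊢
    rw [hCapp, hCapp, h1, h3]
  obtain ⟨c, hc⟩ := Module.End.exists_eigenvalue C
  obtain ⟨x, hx⟩ := hc.exists_hasEigenvector
  set U : Submodule ℂ V := LinearMap.ker (C - c • LinearMap.id) with hU
  have hxU : x ∈ U := by
    simp only [hU, LinearMap.mem_ker, LinearMap.sub_apply, LinearMap.smul_apply,
      LinearMap.id_apply, hx.apply_eq_smul, sub_self]
  have hUinv : ∀ g : N, ∀ v ∈ U, σ g v ∈ U := by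
    intro g v hv
    simp only [hU, LinearMap.mem_ker, LinearMap.sub_apply, LinearMap.smul_apply,
      LinearMap.id_apply, sub_eq_zero] at hv ⊢
    have h2 := LinearMap.congr_fun (hcomm g) v
    simp only [LinearMap.comp_apply] at h2
    rw [← h2, hv, map_smul]
  rcases hirr.2 U hUinv with h | h
  · exact absurd (h ▸ hxU) (by simp [hx.2])
  · refine ⟨c, ?_⟩
    ext φ
    have hall : A₀ φ ∈ U := h ▸ Submodule.mem_top
    simp only [hU, LinearMap.mem_ker, LinearMap.sub_apply, LinearMap.smul_apply,
      LinearMap.id_apply, sub_eq_zero] at hall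
    have h4 : e.symm (A₀ φ) = φ := by
      apply e.injective
      rw [e.apply_symm_apply, he]
    have h5 : C (A₀ φ) = A φ := by rw [hCapp, h4]
    rw [LinearMap.smul_apply, ← h5, hall]

/-- The transpose operator on `Hom(V', V)`. -/
noncomputable def trL (A : Dual ℂ V →ₗ[ℂ] V) : Dual ℂ V →ₗ[ℂ] V :=
  (evalEquiv ℂ V).symm.toLinearMap ∘ₗ A.dualMap

lemma trL_apply (A : Dual ℂ V →ₗ[ℂ] V) (φ ψ : Dual ℂ V) :
    ψ (trL A φ) = φ (A ψ) := by
  simp only [trL, LinearMap.comp_apply, LinearEquiv.coe_coe,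
    Module.apply_evalEquiv_symm_apply, LinearMap.dualMap_apply]

lemma trL_mem (σ : Representation ℂ N V) (τ : N → N)
    (hmul : ∀ a b : N, τ (a * b) = τ b * τ a) (hinv : ∀ g : N, τ (τ g) = g)
    {A : Dual ℂ V →ₗ[ℂ] V} (hA : A ∈ repHom (tauConj σ τ hmul) σ) :
    trL A ∈ repHom (tauConj σ τ hmul) σ := by
  intro g
  ext φ
  simp only [LinearMap.comp_apply, tauConj_apply]
  apply dual_sep
  intro ψ
  rw [trL_apply]
  have h1 : ψ ((σ g) (trL A φ)) = ((σ g).dualMap ψ) (trL A φ) := rfl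
  rw [h1, trL_apply]
  have h2 : (σ g).dualMap = tauConj σ τ hmul (τ g) := by
    rw [tauConj_apply, hinv]
  rw [h2, ← LinearMap.comp_apply A, hA (τ g)]
  simp only [LinearMap.comp_apply, LinearMap.dualMap_apply]

lemma fsnum_bot (σ : Representation ℂ N V) (τ : N → N)
    (hmul : ∀ a b : N, τ (a * b) = τ b * τ a)
    (hbot : repHom (tauConj σ τ hmul) σ = ⊥) : FSnum σ τ hmul = 0 := by
  rw [FSnum, hbot, bot_inf_eq, bot_inf_eq, finrank_bot]
  simp

lemma fsnum_cast (σ : Representation ℂ N V) (τ : N → N)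
    (hmul : ∀ a b : N, τ (a * b) = τ b * τ a) (A₀ : Dual ℂ V →ₗ[ℂ] V)
    (hspan : repHom (tauConj σ τ hmul) σ = Submodule.span ℂ {A₀})
    (hA₀ne : A₀ ≠ 0) (ε : ℂ) (hε2 : ε = 1 ∨ ε = -1)
    (hsym : ∀ φ ψ : Dual ℂ V, ψ (A₀ φ) = ε * φ (A₀ ψ)) :
    (FSnum σ τ hmul : ℂ) = ε := by
  have hmemH : A₀ ∈ repHom (tauConj σ τ hmul) σ :=
    hspan ▸ Submodule.mem_span_singleton_self A₀
  rcases hε2 with h | h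
  · subst h
    have hsymm : A₀ ∈ symSub ℂ V := by
      intro φ ψ
      rw [hsym ψ φ, one_mul]
    have h1 : repHom (tauConj σ τ hmul) σ ⊓ symSub ℂ V = Submodule.span ℂ {A₀} := by
      apply le_antisymm
      · rw [← hspan]; exact inf_le_left
      · rw [Submodule.span_le, Set.singleton_subset_iff]
        exact Submodule.mem_inf.mpr ⟨hmemH, hsymm⟩
    have h2 : repHom (tauConj σ τ hmul) σ ⊓ skewSub ℂ V = ⊥ := by
      rw [eq_bot_iff]
      rintro A hA
      obtain ⟨hA1, hA2⟩ := Submodule.mem_inf.mp hA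
      rw [hspan, Submodule.mem_span_singleton] at hA1
      obtain ⟨a, rfl⟩ := hA1
      rw [Submodule.mem_bot]
      ext φ
      rw [LinearMap.zero_apply]
      apply dual_sep
      intro ψ
      rw [map_zero]
      have hs := hsym φ ψ
      have hk := hA2 ψ φ
      simp only [LinearMap.smul_apply, map_smul, smul_eq_mul, one_mul] at hk hs ⊢
      rw [hs] at hk ⊢
      linear_combination hk / 2
    rw [FSnum, h1, h2, finrank_span_singleton hA₀ne, finrank_bot]
    norm_num
  · subst h
    have hskew : A₀ ∈ skewSub ℂ V := by
      intro φ ψ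
      rw [hsym ψ φ]
      ring
    have h1 : repHom (tauConj σ τ hmul) σ ⊓ skewSub ℂ V = Submodule.span ℂ {A₀} := by
      apply le_antisymm
      · rw [← hspan]; exact inf_le_left
      · rw [Submodule.span_le, Set.singleton_subset_iff]
        exact Submodule.mem_inf.mpr ⟨hmemH, hskew⟩
    have h2 : repHom (tauConj σ τ hmul) σ ⊓ symSub ℂ V = ⊥ := by
      rw [eq_bot_iff]
      rintro A hA
      obtain ⟨hA1, hA2⟩ := Submodule.mem_inf.mp hA
      rw [hspan, Submodule.mem_span_singleton] at hA1
      obtain ⟨a, rfl⟩ := hA1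
      rw [Submodule.mem_bot]
      ext φ
      rw [LinearMap.zero_apply]
      apply dual_sep
      intro ψ
      rw [map_zero]
      have hs := hsym φ ψ
      have hk := hA2 ψ φ
      simp only [LinearMap.smul_apply, map_smul, smul_eq_mul] at hk hs ⊢
      rw [hs] at hk ⊢
      linear_combination hk / 2
    rw [FSnum, h1, h2, finrank_span_singleton hA₀ne, finrank_bot]
    norm_num

/-- The elementary rank-one map `φ ↦ φ(bᵢ) • bⱼ`. -/
noncomputable def elemMap {ι : Type*} (b : Basis ι ℂ V) (i j : ι) :
    Dual ℂ V →ₗ[ℂ] V where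
  toFun φ := φ (b i) • b j
  map_add' φ ψ := by simp [add_smul]
  map_smul' c φ := by simp [mul_smul]

lemma elemMap_apply {ι : Type*} (b : Basis ι ℂ V) (i j : ι) (φ : Dual ℂ V) :
    elemMap b i j φ = φ (b i) • b j := rfl

lemma char_eq (σ : Representation ℂ N V) (τ : N → N)
    (hmul : ∀ a b : N, τ (a * b) = τ b * τ a)
    {ι : Type*} [Fintype ι] [DecidableEq ι] (b : Basis ι ℂ V) (n : N) :
    repChar σ ((τ n)⁻¹ * n)
      = ∑ i, ∑ j, b.dualBasis i
          ((σ n ∘ₗ elemMap b i j ∘ₗ (σ (τ n⁻¹)).dualMap) (b.dualBasis j)) := by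
  have h0 : σ ((τ n)⁻¹ * n) = σ (τ n⁻¹) * σ n := by
    rw [map_mul, tau_inv τ hmul]
  rw [repChar, h0, LinearMap.trace_mul_comm, LinearMap.trace_eq_matrix_trace ℂ b,
    LinearMap.toMatrix_mul]
  simp only [Matrix.trace, Matrix.diag, Matrix.mul_apply, LinearMap.toMatrix_apply,
    LinearMap.comp_apply, elemMap_apply, LinearMap.dualMap_apply, map_smul,
    smul_eq_mul, Basis.dualBasis_apply, Finset.sum_congr]
  refine Finset.sum_congr rfl fun i _ => Finset.sum_congr rfl fun j _ => ?_
  ring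

end TFSAux

set_option maxHeartbeats 1000000 in
/-- **Twisted Frobenius–Schur theorem, Kawanaka–Matsuyama.** For an
irreducible finite-dimensional complex representation `σ` of a finite group `N` with
involutory anti-automorphism `τ`,
`(1/|N|) Σ_n χ_σ(τ(n)⁻¹ n) = C_τ(σ)`. -/
theorem twisted_frobenius_schur
    {N : Type*} [Group N] [Fintype N]
    {V : Type*} [AddCommGroup V] [Module ℂ V] [FiniteDimensional ℂ V]
    (τ : N → N) (hmul : ∀ a b : N, τ (a * b) = τ b * τ a)
    (hinv : ∀ g : N, τ (τ g) = g)
    (σ : Representation ℂ N V) (hirr : CST.IsIrreducible σ) :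
    (Fintype.card N : ℂ)⁻¹ * ∑ n : N, CST.repChar σ ((τ n)⁻¹ * n) =
      (CST.FSnum σ τ hmul : ℂ) := by
  classical
  haveI : Nontrivial V := hirr.1
  obtain ⟨A₀, hspan⟩ := TFSAux.schur σ τ hmul hirr
  set b : Basis (Fin (Module.finrank ℂ V)) ℂ V := Module.finBasis ℂ V with hbdef
  have hR : ∀ i j, b.dualBasis i ((TFSAux.avgL σ τ (TFSAux.elemMap b i j)) (b.dualBasis j))
      = (Fintype.card N : ℂ)⁻¹ *
        ∑ n : N, b.dualBasis i
          ((σ n ∘ₗ TFSAux.elemMap b i j ∘ₗ (σ (τ n⁻¹)).dualMap) (b.dualBasis j)) := by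
    intro i j
    rw [TFSAux.avgL_apply]
    simp only [LinearMap.smul_apply, LinearMap.sum_apply, map_smul, map_sum, smul_eq_mul]
  have step1 : (Fintype.card N : ℂ)⁻¹ * ∑ n : N, CST.repChar σ ((τ n)⁻¹ * n)
      = ∑ i, ∑ j, b.dualBasis i
          ((TFSAux.avgL σ τ (TFSAux.elemMap b i j)) (b.dualBasis j)) := by
    rw [Finset.sum_congr rfl fun n _ => TFSAux.char_eq σ τ hmul b n]
    rw [show (∑ n : N, ∑ i, ∑ j, b.dualBasis i
          ((σ n ∘ₗ TFSAux.elemMap b i j ∘ₗ (σ (τ n⁻¹)).dualMap) (b.dualBasis j)))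
        = ∑ i, ∑ j, ∑ n : N, b.dualBasis i
          ((σ n ∘ₗ TFSAux.elemMap b i j ∘ₗ (σ (τ n⁻¹)).dualMap) (b.dualBasis j)) from by
      rw [Finset.sum_comm]
      exact Finset.sum_congr rfl fun i _ => Finset.sum_comm]
    rw [Finset.mul_sum]
    refine Finset.sum_congr rfl fun i _ => ?_
    rw [Finset.mul_sum]
    exact Finset.sum_congr rfl fun j _ => (hR i j).symm
  rw [step1]
  by_cases hA₀ne : A₀ = 0
  · have hbot : CST.repHom (CST.tauConj σ τ hmul) σ = ⊥ := by
      rw [hspan, hA₀ne, Submodule.span_zero_singleton]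
    have hz : ∀ i j, TFSAux.avgL σ τ (TFSAux.elemMap b i j) = 0 := by
      intro i j
      have hm := TFSAux.avgL_mem σ τ hmul (TFSAux.elemMap b i j)
      rw [hbot, Submodule.mem_bot] at hm
      exact hm
    rw [TFSAux.fsnum_bot σ τ hmul hbot]
    simp [hz]
  · have hmemH : A₀ ∈ CST.repHom (CST.tauConj σ τ hmul) σ :=
      hspan ▸ Submodule.mem_span_singleton_self A₀
    obtain ⟨ε, hε⟩ := Submodule.mem_span_singleton.mp
      (hspan ▸ TFSAux.trL_mem σ τ hmul hinv hmemH)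
    have hsym : ∀ φ ψ : Module.Dual ℂ V, ψ (A₀ φ) = ε * φ (A₀ ψ) := by
      intro φ ψ
      rw [← TFSAux.trL_apply A₀ ψ φ, ← hε]
      simp
    have hε2 : ε = 1 ∨ ε = -1 := by
      obtain ⟨φ, hφ⟩ : ∃ φ, A₀ φ ≠ 0 := by
        by_contra hco
        push_neg at hco
        exact hA₀ne (LinearMap.ext fun φ => by rw [hco φ, LinearMap.zero_apply])
      obtain ⟨ψ, hψ⟩ : ∃ ψ : Module.Dual ℂ V, ψ (A₀ φ) ≠ 0 := by
        by_contra hco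
        push_neg at hco
        exact hφ ((Module.forall_dual_apply_eq_zero_iff ℂ _).mp hco)
      have h2 : ψ (A₀ φ) = ε * (ε * ψ (A₀ φ)) := by
        conv_lhs => rw [hsym φ ψ, hsym ψ φ]
      have h3 : (ε * ε - 1) * ψ (A₀ φ) = 0 := by linear_combination -h2
      rcases mul_eq_zero.mp h3 with h | h
      · exact mul_self_eq_one_iff.mp (by linear_combination h)
      · exact absurd h hψ
    choose c hc using fun i j => Submodule.mem_span_singleton.mp
      (hspan ▸ TFSAux.avgL_mem σ τ hmul (TFSAux.elemMap b i j))
    set m : Fin (Module.finrank ℂ V) → Fin (Module.finrank ℂ V) → ℂ :=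
      fun i j => b.dualBasis j (A₀ (b.dualBasis i)) with hm
    have hA₀eq : A₀ = ∑ i, ∑ j, m i j • TFSAux.elemMap b i j := by
      refine b.dualBasis.ext fun k => ?_
      simp only [LinearMap.sum_apply, LinearMap.smul_apply, TFSAux.elemMap_apply,
        Basis.dualBasis_apply_self]
      rw [Finset.sum_comm]
      simp only [ite_smul, one_smul, zero_smul, smul_ite, smul_zero,
        Finset.sum_ite_eq, Finset.sum_ite_eq', Finset.mem_univ, if_true]
      conv_lhs => rw [← b.sum_repr (A₀ (b.dualBasis k))]
      refine Finset.sum_congr rfl fun j _ => ?_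
      simp only [hm]
      rw [Basis.dualBasis_apply]
    have h6 : A₀ = (∑ i, ∑ j, m i j * c i j) • A₀ := by
      conv_lhs => rw [← TFSAux.avgL_eq_self σ τ hmul hmemH, hA₀eq]
      rw [map_sum, Finset.sum_smul]
      refine Finset.sum_congr rfl fun i _ => ?_
      rw [map_sum, Finset.sum_smul]
      refine Finset.sum_congr rfl fun j _ => ?_
      rw [map_smul, ← hc i j, smul_smul]
    have h7 : (∑ i, ∑ j, m i j * c i j) = 1 := by
      have h8 : ((∑ i, ∑ j, m i j * c i j) - 1) • A₀ = 0 := by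
        rw [sub_smul, one_smul, ← h6, sub_self]
      rcases smul_eq_zero.mp h8 with h | h
      · linear_combination h
      · exact absurd h hA₀ne
    have hterm : ∀ i j, b.dualBasis i
        ((TFSAux.avgL σ τ (TFSAux.elemMap b i j)) (b.dualBasis j))
        = ε * (m i j * c i j) := by
      intro i j
      rw [← hc i j]
      simp only [LinearMap.smul_apply, map_smul, smul_eq_mul]
      rw [hsym (b.dualBasis j) (b.dualBasis i)]
      simp only [hm]
      ring
    rw [Finset.sum_congr rfl fun i _ => Finset.sum_congr rfl fun j _ => hterm i j]
    rw [show (∑ i, ∑ j, ε * (m i j * c i j)) = ε * ∑ i, ∑ j, m i j * c i j from by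
      rw [Finset.mul_sum]
      exact Finset.sum_congr rfl fun i _ => by rw [Finset.mul_sum]]
    rw [h7, mul_one]
    exact (TFSAux.fsnum_cast σ τ hmul A₀ hspan hA₀ne ε hε2 hsym).symm
end
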